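/- If a shape S ⊆ G is linear (contained in a·⟨b⟩·c for some a,b,c ∈ G with b of infinite order) and |S| ≥ 2, then there exists a finite subset of G whose S-filling closure is infinite. -/

import Mathlib

open scoped symmDiff

/-- The left translate `gS` of a finite shape `S` in a group `G`. -/
def gset {G : Type*} [Group G] (g : G) (S : Finset G) : Set G :=
  (fun s => g * s) '' (S : Set G)

/-- A `(C,S)`-filling move: `P ⊊ Q`, some translate `gS` meets `P` in exactly
`|S| - 1` elements, and `Q = P ∪ gC`. -/
def FillMove {G : Type*} [Group G] (C S : Finset G) (P Q : Set G) : Prop :=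
  P ⊂ Q ∧ ∃ g : G, (P ∩ gset g S).ncard = S.card - 1 ∧ Q = P ∪ gset g C

/-- The `(C,S)`-filling closure: the union of all sets reachable from `P` by
finitely many filling moves. -/
def fillClosure {G : Type*} [Group G] (C S : Finset G) (P : Set G) : Set G :=
  {x | ∃ Q : Set G, Relation.ReflTransGen (FillMove C S) P Q ∧ x ∈ Q}

/-!
If `S = {a bⁿ c : n ∈ E}`, then `a bᵐ a⁻¹` shifts exponents by `m`, so translating `S` so that its
top exponent lands on `M + 1` puts every other element of the translate inside the "interval"
`{a bⁿ c : min E ≤ n ≤ M}` once `M ≥ max E`. Filling adds `a b^(M+1) c`, and since `b` has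
infinite order these intervals grow forever.
-/

section

variable {G : Type*} [Group G]

lemma ncard_gset (g : G) (S : Finset G) : (gset g S).ncard = S.card := by
  rw [gset, Set.ncard_image_of_injective _ (mul_right_injective g), Set.ncard_coe_finset]

lemma fillMove_insert {S : Finset G} {P : Set G} {g x : G} (hx : x ∈ gset g S) (hxP : x ∉ P)
    (hsub : gset g S \ {x} ⊆ P) : FillMove S S P (insert x P) := by
  have hinter : P ∩ gset g S = gset g S \ {x} := by
    ext y
    constructor
    · rintro ⟨hyP, hyS⟩
      exact ⟨hyS, fun hyx => hxP (hyx ▸ hyP)⟩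
    · rintro hy
      exact ⟨hsub hy, hy.1⟩
  refine ⟨Set.ssubset_insert hxP, g, ?_, ?_⟩
  · rw [hinter, Set.ncard_sdiff_singleton_of_mem hx, ncard_gset]
  · rw [← Set.sdiff_union_of_subset (Set.singleton_subset_iff.mpr hx), ← Set.union_assoc,
      Set.union_eq_left.mpr hsub, Set.union_singleton]

variable [DecidableEq G] {f : ℤ → G} {shift : ℤ → G}

lemma fillMove_image_Icc (hf : Function.Injective f) (hshift : ∀ m n, shift m * f n = f (n + m))
    {E : Finset ℤ} {lo hi M : ℤ} (hlo : ∀ n ∈ E, lo ≤ n) (hhi : hi ∈ E)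
    (hle : ∀ n ∈ E, n ≤ hi) (hM : hi ≤ M) :
    FillMove (E.image f) (E.image f) (f '' Set.Icc lo M) (f '' Set.Icc lo (M + 1)) := by
  have hlo_hi := hlo hi hhi
  have hgset : gset (shift (M + 1 - hi)) (E.image f) = (fun n => f (n + (M + 1 - hi))) '' E := by
    simp only [gset, Finset.coe_image, Set.image_image, hshift]
  rw [← Set.insert_Icc_right_eq_Icc_add_one (by omega), Set.image_insert_eq]
  apply fillMove_insert (g := shift (M + 1 - hi))
  · rw [hgset]
    exact ⟨hi, hhi, congrArg f (by omega)⟩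
  · rintro ⟨n, hn, hfn⟩
    have := hf hfn
    simp only [Set.mem_Icc] at hn
    omega
  · rw [hgset]
    rintro _ ⟨⟨n, hn, rfl⟩, hne⟩
    have hn_ne : n ≠ hi := by
      rintro rfl
      exact hne (congrArg f (by omega))
    have := hlo n hn
    have := hle n hn
    exact ⟨n + (M + 1 - hi), ⟨by omega, by omega⟩, rfl⟩

lemma infinite_fillClosure_image_Icc (hf : Function.Injective f)
    (hshift : ∀ m n, shift m * f n = f (n + m)) {E : Finset ℤ} (hE : E.Nonempty) :
    (fillClosure (E.image f) (E.image f) (f '' Set.Icc (E.min' hE) (E.max' hE))).Infinite := by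
  have hreach : ∀ M, E.max' hE ≤ M →
      Relation.ReflTransGen (FillMove (E.image f) (E.image f))
        (f '' Set.Icc (E.min' hE) (E.max' hE)) (f '' Set.Icc (E.min' hE) M) := by
    intro M hM
    induction M, hM using Int.leInduction with
    | base => exact .refl
    | succ M hM ih =>
      exact ih.tail (fillMove_image_Icc hf hshift (fun n hn => E.min'_le n hn) (E.max'_mem hE)
        (fun n hn => E.le_max' n hn) hM)
  have hsub : f '' Set.Ici (E.max' hE) ⊆
      fillClosure (E.image f) (E.image f) (f '' Set.Icc (E.min' hE) (E.max' hE)) := by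
    rintro _ ⟨M, hM, rfl⟩
    exact ⟨_, hreach M hM, M, ⟨(E.min'_le_max' hE).trans hM, le_rfl⟩, rfl⟩
  exact ((Set.Ici_infinite _).image hf.injOn).mono hsub

end

/-- A linear shape with at least two elements has a finite subset with infinite
`S`-filling closure. -/
theorem linear_infinite_fillClosure {G : Type*} [Group G] (S : Finset G)
    (hlin : ∃ a b c : G, ¬ IsOfFinOrder b ∧
      (S : Set G) ⊆ {x : G | ∃ n : ℤ, x = a * b ^ n * c})
    (hcard : 2 ≤ S.card) :
    ∃ P : Finset G, (fillClosure S S (P : Set G)).Infinite := by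
  classical
  obtain ⟨a, b, c, hb, hS⟩ := hlin
  set f : ℤ → G := fun n => a * b ^ n * c
  have hf : Function.Injective f := fun m n h =>
    injective_zpow_iff_not_isOfFinOrder.mpr hb (mul_left_cancel (mul_right_cancel h))
  have hshift : ∀ m n, a * b ^ m * a⁻¹ * f n = f (n + m) := fun m n => by
    simp only [f, zpow_add]
    group
  obtain ⟨E, -, rfl⟩ : ∃ E : Finset ℤ, (E : Set ℤ) ⊆ Set.univ ∧ E.image f = S :=
    Finset.subset_set_image_iff.mp fun x hx => by
      obtain ⟨n, rfl⟩ := hS hx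
      exact ⟨n, trivial, rfl⟩
  have hE : E.Nonempty := (Finset.card_pos.mp (by omega : 0 < (E.image f).card)).of_image
  refine ⟨(Finset.Icc (E.min' hE) (E.max' hE)).image f, ?_⟩
  rw [Finset.coe_image, Finset.coe_Icc]
  exact infinite_fillClosure_image_Icc hf hshift hE
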